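/- Let C > 0 and t₀ ∈ ℝ, and set x₀ = C sech(t₀) and y₀ = C(tanh(t₀) − 1). Then log((x₀² + y₀²)/x₀) = log 2 + log C − t₀. Consequently the sojourn time S = log 2 + log C − t₀ of the geodesic from (x₀, y₀) to the boundary point (0, 0) equals minus the phase φ(x₀, y₀, 0) = −log((x₀² + y₀²)/x₀) of the Eisenstein function on hyperbolic space. -/
import Mathlib

/-- For the unit-speed geodesic `γ(t) = (C sech(t + t₀), C tanh(t + t₀) − C)` of
the hyperbolic upper half-plane, starting at `(x₀, y₀) = γ(0)` and converging to
the boundary point `(0,0)`, the sojourn time `S = log 2 + log C − t₀` equals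
minus the phase `φ(x₀, y₀, 0) = −log((x₀² + y₀²)/x₀)` of the Eisenstein
function: `log((x₀² + y₀²)/x₀) = log 2 + log C − t₀`. -/
theorem sojourn_time_eq_eisenstein_phase (C t₀ : ℝ) (hC : 0 < C)
    (x₀ y₀ : ℝ)
    (hx₀ : x₀ = C / Real.cosh t₀)
    (hy₀ : y₀ = C * (Real.tanh t₀ - 1)) :
    Real.log ((x₀^2 + y₀^2) / x₀) = Real.log 2 + Real.log C - t₀ := by
  have key : (x₀^2 + y₀^2) / x₀ = 2 * C * Real.exp (-t₀) := by
    rw [hx₀, hy₀, Real.tanh_eq_sinh_div_cosh, Real.cosh_eq, Real.sinh_eq,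
      Real.exp_neg]
    have he : Real.exp t₀ ≠ 0 := Real.exp_ne_zero t₀
    have hpos : (0:ℝ) < Real.exp t₀ + (Real.exp t₀)⁻¹ := by positivity
    field_simp
    ring
  rw [key, Real.log_mul (by positivity) (Real.exp_ne_zero _),
    Real.log_mul (by norm_num) hC.ne', Real.log_exp]
  ring
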